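/- Let K be a divisible ordered abelian group, let G and H be convex subgroups of K and let a, b ∈ K. Then the cuts a + G⁺ and b − H⁺ of K are never equal; consequently, the signature of a cut of K is well defined (no cut has simultaneously signature 1 and signature −1). -/

import Mathlib

open FirstOrder FirstOrder.Language Set

universe u v w w' w''

/-- The bundled class removed from Mathlib, restored with its old meaning. -/
class LinearOrderedAddCommGroup (M : Type*) extends AddCommGroup M, LinearOrder M, IsOrderedAddMonoid M

/-- The bundled class removed from Mathlib, restored with its old meaning. -/
class LinearOrderedField (K : Type*) extends Field K, LinearOrder K, IsStrictOrderedRing K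

instance LinearOrderedField.toLinearOrderedAddCommGroup (K : Type*) [LinearOrderedField K] :
    LinearOrderedAddCommGroup K where

namespace CutPaper

/-! ### Dedekind cuts -/

/-- A (Dedekind) cut of a linear order, identified with its lower set `p^L`;
the upper set `p^R` is the complement. -/
structure Cut (M : Type*) [LinearOrder M] where
  carrier : Set M
  lower : IsLowerSet carrier

namespace Cut

variable {M : Type*} [LinearOrder M]

@[ext] theorem ext {p q : Cut M} (h : p.carrier = q.carrier) : p = q := by
  cases p; cases q; simpa using h

/-- `p < q` for cuts. -/
instance : LT (Cut M) := ⟨fun p q => p.carrier ⊂ q.carrier⟩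

instance : LE (Cut M) := ⟨fun p q => p.carrier ⊆ q.carrier⟩

end Cut

section Order

variable {M A : Type*} [LinearOrder M] [LinearOrder A]

/-- The upper edge `Y⁺` of a subset `Y`: the cut whose upper set is `{x | x > Y}`. -/
def upperEdge (Y : Set M) : Cut M :=
  ⟨{x | ∃ y ∈ Y, x ≤ y}, by
    intro a b hba ⟨y, hy, hay⟩
    exact ⟨y, hy, hba.trans hay⟩⟩

/-- The lower edge `Y⁻` of a subset `Y`: the cut whose lower set is `{x | x < Y}`. -/
def lowerEdge (Y : Set M) : Cut M :=
  ⟨{x | ∀ y ∈ Y, x < y}, by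
    intro a b hba ha y hy
    exact lt_of_le_of_lt hba (ha y hy)⟩

/-- The restriction `p ↾ A` of a cut of `M` to `A`, along a (monotone) map `ι : A → M`. -/
def Cut.restrict (ι : A → M) (p : Cut M) : Cut A :=
  ⟨{a | ∃ a', a ≤ a' ∧ ι a' ∈ p.carrier}, by
    intro a b hba ⟨a', ha', hmem⟩
    exact ⟨a', hba.trans ha', hmem⟩⟩

/-- The cut of `A` realized by an element `α` of an extension `M` of `A` (via `ι : A → M`). -/
def cutOfElem (ι : A → M) (α : M) : Cut A :=
  ⟨{a | ∃ a', a ≤ a' ∧ ι a' < α}, by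
    intro a b hba ⟨a', ha', hlt⟩
    exact ⟨a', hba.trans ha', hlt⟩⟩

end Order

/-! ### Cuts of ordered abelian groups -/

section Group

variable {M : Type*} [LinearOrderedAddCommGroup M]

/-- The translate `a + p` of a cut. -/
def addCut (a : M) (p : Cut M) : Cut M :=
  ⟨{x | x - a ∈ p.carrier}, by
    intro x y hyx hx
    exact p.lower (by simpa using sub_le_sub_right hyx a) hx⟩

/-- The reflected translate `a - p` of a cut; its lower set is `a - p^R`. -/
def subCut (a : M) (p : Cut M) : Cut M :=
  ⟨{x | a - x ∉ p.carrier}, by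
    intro x y hyx hx hmem
    exact hx (p.lower (by simpa using sub_le_sub_left hyx a) hmem)⟩

/-- A convex subgroup of an ordered abelian group. -/
def IsConvexAddSubgroup (G : Set M) : Prop :=
  (0 : M) ∈ G ∧ (∀ x ∈ G, ∀ y ∈ G, x + y ∈ G) ∧ (∀ x ∈ G, -x ∈ G) ∧
    ∀ x ∈ G, ∀ y ∈ G, ∀ z, x ≤ z → z ≤ y → z ∈ G

/-- The invariance group `G(p) = {a | a + p = p}` of a cut. -/
def invGroup (p : Cut M) : Set M :=
  {a | addCut a p = p}

/-- The cut `p̂ := G(p)⁺`. -/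
def hatCut (p : Cut M) : Cut M :=
  upperEdge (invGroup p)

/-- The set `Z(p) = {a | a + p̂ = p or a - p̂ = p}`. -/
def Zset (p : Cut M) : Set M :=
  {a | addCut a (hatCut p) = p ∨ subCut a (hatCut p) = p}

open Classical in
/-- The signature of a cut of a (divisible) ordered abelian group. -/
noncomputable def cutSign (p : Cut M) : ℤ :=
  if ∃ (a : M) (G : Set M), IsConvexAddSubgroup G ∧ p = addCut a (upperEdge G) then 1
  else if ∃ (a : M) (G : Set M), IsConvexAddSubgroup G ∧ p = subCut a (upperEdge G) then -1
  else 0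

open Classical in
/-- For a cut `p` with `sign p ≠ 0`, `p` is an edge of `Z(p)` and `z(p)` is the other
edge; if `sign p = 0` then `z(p) := p`. -/
noncomputable def zCut (p : Cut M) : Cut M :=
  if cutSign p = 0 then p
  else if p = upperEdge (Zset p) then lowerEdge (Zset p) else upperEdge (Zset p)

end Group

/-! ### Cuts of ordered fields; multiplicative notions -/

section Field

variable {M : Type*} [LinearOrderedField M]

/-- The image `b · r` of a cut `r` under multiplication by `b`. -/
def smulCut (b : M) (r : Cut M) : Cut M :=
  ⟨{y | ∃ x, ((0 ≤ b ∧ x ∈ r.carrier) ∨ (b < 0 ∧ x ∉ r.carrier)) ∧ y ≤ b * x}, by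
    intro x y hyx ⟨z, hz, hxz⟩
    exact ⟨z, hz, hyx.trans hxz⟩⟩

/-- The image of a cut of the positive elements under `x ↦ x⁻¹`; cuts of the positive
elements are encoded as cuts of `M` whose lower set contains all nonpositive elements. -/
def invCut (p : Cut M) : Cut M :=
  ⟨{y | y ≤ 0 ∨ (0 < y ∧ y⁻¹ ∉ p.carrier)}, by
    intro x y hyx hx
    rcases le_or_gt y 0 with hy | hy
    · exact Or.inl hy
    · rcases hx with hx | ⟨hx0, hxinv⟩
      · exact absurd (hy.trans_le hyx) (not_lt.2 hx)
      · refine Or.inr ⟨hy, fun hmem => hxinv ?_⟩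
        exact p.lower (one_div x ▸ one_div y ▸ one_div_le_one_div_of_le hy hyx) hmem⟩

/-- `p^ε` for `ε ∈ {−1, 1}` (for cuts of the positive elements). -/
noncomputable def pmPow (ε : ℤ) (p : Cut M) : Cut M :=
  if ε = 1 then p else invCut p

/-- The cut `|p|` of the positive elements (encoded as a cut of `M` whose lower set
contains all nonpositive elements). -/
def absCut (p : Cut M) : Cut M :=
  ⟨{x | x ≤ 0 ∨ (0 < x ∧ (x ∈ p.carrier ∨ -x ∉ p.carrier))}, by
    intro x y hyx hx
    rcases le_or_gt y 0 with hy | hy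
    · exact Or.inl hy
    rcases hx with hx | ⟨hx0, hx⟩
    · exact absurd (hy.trans_le hyx) (not_lt.2 hx)
    rcases hx with hx | hx
    · exact Or.inr ⟨hy, Or.inl (p.lower hyx hx)⟩
    · exact Or.inr ⟨hy, Or.inr fun hmem => hx (p.lower (neg_le_neg hyx) hmem)⟩⟩

/-- A convex subgroup of the multiplicative group of positive elements. -/
def IsMulConvexSubgroup (G : Set M) : Prop :=
  G ⊆ {x | 0 < x} ∧ (1 : M) ∈ G ∧ (∀ x ∈ G, ∀ y ∈ G, x * y ∈ G) ∧ (∀ x ∈ G, x⁻¹ ∈ G) ∧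
    ∀ x ∈ G, ∀ y ∈ G, ∀ z, x ≤ z → z ≤ y → z ∈ G

open Classical in
/-- The multiplicative signature `sign* p`: the signature of `|p|` with respect to the
ordered multiplicative group of positive elements. -/
noncomputable def mulSign (p : Cut M) : ℤ :=
  if ∃ (a : M) (G : Set M), 0 < a ∧ IsMulConvexSubgroup G ∧
      absCut p = upperEdge ((a * ·) '' G) then 1
  else if ∃ (a : M) (G : Set M), 0 < a ∧ IsMulConvexSubgroup G ∧
      absCut p = lowerEdge ((a * ·) '' G) then -1
  else 0

/-- The invariance ring `V(p) = {a | a · G(p) ⊆ G(p)}` of a cut. -/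
def Vring (p : Cut M) : Set M :=
  {a | ∀ g ∈ invGroup p, a * g ∈ invGroup p}

/-- `V(G) := V(G⁺)` for a convex subgroup `G`. -/
def VG (G : Set M) : Set M :=
  Vring (upperEdge G)

/-- The maximal ideal of a convex valuation ring. -/
def maxIdeal (V : Set M) : Set M :=
  {x | x = 0 ∨ x⁻¹ ∉ V}

/-- `Z*(G) = {a > 0 | a · V(G)⁺ = G⁺ or a · m(V(G))⁺ = G⁺}` (cuts computed in the
multiplicative group of positive elements). -/
def Zstar (G : Set M) : Set M :=
  {a | 0 < a ∧ (smulCut a (upperEdge (VG G)) = upperEdge G ∨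
    smulCut a (upperEdge (maxIdeal (VG G))) = upperEdge G)}

open Classical in
/-- `z*(G) = z*(G⁺)`: the cut `z(G⁺)` computed in `(M^{>0}, ·, <)`. -/
noncomputable def zStar (G : Set M) : Cut M :=
  if mulSign (upperEdge G) = 0 then upperEdge G
  else if upperEdge G = upperEdge (Zstar G) then lowerEdge (Zstar G) else upperEdge (Zstar G)

/-- A convex subring of an ordered field. -/
def IsConvexSubring (V : Set M) : Prop :=
  (0 : M) ∈ V ∧ (1 : M) ∈ V ∧ (∀ x ∈ V, ∀ y ∈ V, x + y ∈ V) ∧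
    (∀ x ∈ V, ∀ y ∈ V, x * y ∈ V) ∧ (∀ x ∈ V, -x ∈ V) ∧
    ∀ x ∈ V, ∀ y ∈ V, ∀ z, x ≤ z → z ≤ y → z ∈ V

/-- A real closed (ordered) field. -/
def IsRealClosed (M : Type*) [LinearOrderedField M] : Prop :=
  (∀ x : M, 0 ≤ x → ∃ y, y * y = x) ∧
    ∀ p : Polynomial M, Odd p.natDegree → ∃ x, p.eval x = 0

end Field

/-! ### Definability -/

section Definability

variable (L : FirstOrder.Language.{u, v}) {M : Type w} [L.Structure M]

/-- A map `M → M` definable with parameters from `P`. -/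
def DefFun (P : Set M) (f : M → M) : Prop :=
  P.Definable L {v : Fin 2 → M | f (v 0) = v 1}

/-- A `0`-definable map. -/
def ZeroDefFun (f : M → M) : Prop :=
  DefFun L (∅ : Set M) f

/-- Continuity of `f : M → M` with respect to the order topology (for dense orders
without endpoints, e.g. ordered fields). -/
def OrdCont [LinearOrder M] (f : M → M) : Prop :=
  ∀ x u v : M, u < f x → f x < v →
    ∃ s t : M, s < x ∧ x < t ∧ ∀ y, s < y → y < t → u < f y ∧ f y < v

/-- The image `f(p)` of a cut `p` under a definable map `f`, as a cut:
`y ∈ f(p)^L` iff `f > y` on some interval around the gap of `p` with endpoints in `M`. -/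
def imageCut [LinearOrder M] (f : M → M) (p : Cut M) : Cut M :=
  ⟨{y | ∃ c₁ c₂ : Finset M, ↑c₁ ⊆ p.carrier ∧ ↑c₂ ⊆ p.carrierᶜ ∧
      ∀ x, (∀ a ∈ c₁, a < x) → (∀ b ∈ c₂, x < b) → y < f x}, by
    intro x y hyx ⟨c₁, c₂, h₁, h₂, h⟩
    exact ⟨c₁, c₂, h₁, h₂, fun z hz₁ hz₂ => hyx.trans_lt (h z hz₁ hz₂)⟩⟩

/-- The image of a cut of the positive elements under a power function, as a cut. -/
def powCut [LinearOrder M] [Zero M] (f : M → M) (p : Cut M) : Cut M :=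
  ⟨{y | ∃ c₁ c₂ : Finset M, ↑c₁ ⊆ p.carrier ∧ ↑c₂ ⊆ p.carrierᶜ ∧
      ∀ x, 0 < x → (∀ a ∈ c₁, a < x) → (∀ b ∈ c₂, x < b) → y < f x}, by
    intro x y hyx ⟨c₁, c₂, h₁, h₂, h⟩
    exact ⟨c₁, c₂, h₁, h₂, fun z hz0 hz₁ hz₂ => hyx.trans_lt (h z hz0 hz₁ hz₂)⟩⟩

/-- `p ∼ q` over the parameter set `P`: some `P`-definable map maps `p` to `q`. -/
def SimOver [LinearOrder M] (P : Set M) (p q : Cut M) : Prop :=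
  ∃ f : M → M, DefFun L P f ∧ imageCut f p = q

/-- `V` is `T`-convex: a convex subring closed under all `0`-definable
continuous functions. -/
def IsTConvex [LinearOrderedField M] (V : Set M) : Prop :=
  IsConvexSubring V ∧ ∀ f : M → M, ZeroDefFun L f → OrdCont f → ∀ x ∈ V, f x ∈ V

/-- O-minimality of a structure: every definable (with parameters) subset of `M`
is a finite union of convex sets (equivalently, of points and intervals). -/
def OMinimalStruct [LinearOrder M] : Prop :=
  ∀ s : Set M, Set.Definable₁ (univ : Set M) L s →
    ∃ (n : ℕ) (f : Fin n → Set M), (∀ i, (f i).OrdConnected) ∧ s = ⋃ i, f i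

end Definability

/-! ### The language of ordered rings and standard models -/

/-- The language of ordered rings: constants 0, 1, unary -, binary + and ·,
and the binary relation ≤. -/
def ordRingLang : Language :=
  { Functions := fun n => (PLift (n = 0) × Fin 2) ⊕ (PLift (n = 1) × PUnit) ⊕ (PLift (n = 2) × Fin 2),
    Relations := fun n => PLift (n = 2) × PUnit }

/-- Compatibility of an `L`-structure on an ordered field `M` with the ordered field
structure, along an inclusion of languages `ρ : ordRingLang →ᴸ L`. -/
def FieldCompat (L : FirstOrder.Language.{u, v}) (ρ : ordRingLang →ᴸ L) (M : Type w) [L.Structure M]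
    [LinearOrderedField M] : Prop :=
  (∀ v : Fin 0 → M,
    Structure.funMap (ρ.onFunction (Sum.inl (⟨PLift.up rfl, 0⟩) : ordRingLang.Functions 0)) v = 0) ∧
  (∀ v : Fin 0 → M,
    Structure.funMap (ρ.onFunction (Sum.inl (⟨PLift.up rfl, 1⟩) : ordRingLang.Functions 0)) v = 1) ∧
  (∀ v : Fin 1 → M,
    Structure.funMap (ρ.onFunction (Sum.inr (Sum.inl ⟨PLift.up rfl, PUnit.unit⟩) : ordRingLang.Functions 1)) v = - v 0) ∧
  (∀ v : Fin 2 → M,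
    Structure.funMap (ρ.onFunction (Sum.inr (Sum.inr ⟨PLift.up rfl, 0⟩) : ordRingLang.Functions 2)) v = v 0 + v 1) ∧
  (∀ v : Fin 2 → M,
    Structure.funMap (ρ.onFunction (Sum.inr (Sum.inr ⟨PLift.up rfl, 1⟩) : ordRingLang.Functions 2)) v = v 0 * v 1) ∧
  (∀ v : Fin 2 → M,
    Structure.RelMap (ρ.onRelation ((⟨PLift.up rfl, PUnit.unit⟩) : ordRingLang.Relations 2)) v ↔ v 0 ≤ v 1)

/-- `M` is a standard model of `T`: an o-minimal real closed field whose field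
structure is `0`-definable via `ρ`. -/
def IsStdModel (L : FirstOrder.Language.{u, v}) (ρ : ordRingLang →ᴸ L) (T : L.Theory) (M : Type w)
    [L.Structure M] [LinearOrderedField M] : Prop :=
  FieldCompat L ρ M ∧ M ⊨ T ∧ OMinimalStruct L (M := M) ∧ IsRealClosed M

/-- `T` is a complete o-minimal expansion of the theory of real closed ordered fields. -/
def StdTheory (L : FirstOrder.Language.{u, v}) (ρ : ordRingLang →ᴸ L) (T : L.Theory) : Prop :=
  T.IsComplete ∧
    ∀ (M : Type (max u v)) (iS : L.Structure M), M ⊨ T →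
      ∃ iF : LinearOrderedField M, @IsStdModel L ρ T M iS iF

/-- A model is polynomially bounded. -/
def PolyBoundedModel (L : FirstOrder.Language.{u, v}) (M : Type w) [L.Structure M]
    [LinearOrderedField M] : Prop :=
  ∀ f : M → M, ZeroDefFun L f → ∃ (n : ℕ) (c : M), ∀ x, c ≤ x → f x ≤ x ^ n

/-- `T` is polynomially bounded. -/
def PolyBoundedTheory (L : FirstOrder.Language.{u, v}) (ρ : ordRingLang →ᴸ L) (T : L.Theory) : Prop :=
  ∀ (M : Type (max u v)) (iS : L.Structure M) (iF : LinearOrderedField M),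
    @IsStdModel L ρ T M iS iF → @PolyBoundedModel L M iS iF

/-- `T` has an archimedean prime model. -/
def HasArchimedeanPrimeModel (L : FirstOrder.Language.{u, v}) (ρ : ordRingLang →ᴸ L) (T : L.Theory) : Prop :=
  ∃ (P : Type (max u v)) (iS : L.Structure P) (iF : LinearOrderedField P),
    @IsStdModel L ρ T P iS iF ∧ Archimedean P ∧
      ∀ (N : Type (max u v)) (jS : L.Structure N), N ⊨ T → Nonempty (P ↪ₑ[L] N)

/-! ### Expansions by predicates and elementary equivalence over parameters -/

/-- A purely relational language with unary predicates indexed by `I₁` and binary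
predicates indexed by `I₂`. -/
def predLang (I₁ I₂ : Type w) : FirstOrder.Language.{w, w} :=
  { Functions := fun _ => PEmpty, Relations := fun n => (I₁ × PLift (n = 1)) ⊕ (I₂ × PLift (n = 2)) }

/-- The `predLang`-structure given by interpretations of the predicates. -/
def predStructure (I₁ I₂ : Type w) (M : Type w') (r₁ : I₁ → M → Prop)
    (r₂ : I₂ → M → M → Prop) : (predLang I₁ I₂).Structure M where
  funMap := fun f _ => f.elim
  RelMap := fun {n} r v =>
    Sum.casesOn r (fun r => r₁ r.1 (v (Fin.cast r.2.down.symm 0)))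
      (fun r => r₂ r.1 (v (Fin.cast r.2.down.symm 0)) (v (Fin.cast r.2.down.symm 1)))

/-- The expansion of an `L`-structure by unary and binary predicates. -/
def expandBy (L : FirstOrder.Language.{u, v}) {I₁ I₂ : Type w} (M : Type w') [L.Structure M]
    (r₁ : I₁ → M → Prop) (r₂ : I₂ → M → M → Prop) : (L.sum (predLang I₁ I₂)).Structure M :=
  letI := predStructure I₁ I₂ M r₁ r₂
  inferInstance

/-- Elementary equivalence of two `L'`-structures over a common family of parameters
indexed by `α`. -/
def EqvOver (L' : FirstOrder.Language.{u, v}) (M : Type w) (N : Type w') (SM : L'.Structure M)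
    (SN : L'.Structure N) {α : Type w''} (vM : α → M) (vN : α → N) : Prop :=
  ∀ φ : L'.Formula α, @Formula.Realize L' M SM α φ vM ↔ @Formula.Realize L' N SN α φ vN

/-- The language `L(D)` with one new unary predicate. -/
def LD (L : FirstOrder.Language.{u, v}) : Language :=
  L.sum (predLang PUnit.{1} PEmpty.{1})

/-- The expansion `(M, D)` of an `L`-structure by one unary predicate. -/
def setExpansion (L : FirstOrder.Language.{u, v}) (M : Type w) [L.Structure M] (D : Set M) :
    (LD L).Structure M :=
  expandBy L M (fun _ x => x ∈ D) (fun e => e.elim)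

/-- `(M, D) ≡ (N, E)` over the parameters `vM : α → M`, `vN : α → N`
(in the language `L(D)`). -/
def SetEqvOver (L : FirstOrder.Language.{u, v}) (M : Type w) (N : Type w') [L.Structure M] [L.Structure N]
    (D : Set M) (E : Set N) {α : Type w''} (vM : α → M) (vN : α → N) : Prop :=
  EqvOver (LD L) M N (setExpansion L M D) (setExpansion L N E) vM vN

/-- `(M, p^L) ≡_A (N, q^L)` for cuts `p`, `q`, over parameter families. -/
def CutEqvOver (L : FirstOrder.Language.{u, v}) (M : Type w) (N : Type w') [L.Structure M] [L.Structure N]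
    [LinearOrder M] [LinearOrder N] (p : Cut M) (q : Cut N) {α : Type w''}
    (vM : α → M) (vN : α → N) : Prop :=
  SetEqvOver L M N p.carrier q.carrier vM vN

/-! ### Heirs -/

/-- `(q₁,...,qₙ)` (subsets of `N`) is an heir of `(p₁,...,pₙ)` (subsets of `M`) over `M`,
along `ι : M → N`. -/
def IsHeirTuple (L : FirstOrder.Language.{u, v}) (M : Type w) (N : Type w') [L.Structure M]
    [L.Structure N] {n : ℕ} (Ps : Fin n → Set M) (Qs : Fin n → Set N) (ι : M → N) : Prop :=
  ∀ (m k : ℕ) (a : Fin m → M) (φ : L.Formula (Fin m ⊕ Fin k))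
    (ψ : (L.sum (predLang (Fin n) PEmpty.{1})).BoundedFormula (Fin m ⊕ Fin k) 0), ψ.IsQF →
    (∃ x : Fin k → N, φ.Realize (Sum.elim (ι ∘ a) x) ∧
      @Formula.Realize _ N (expandBy L N (fun i y => y ∈ Qs i) (fun e => e.elim)) _ ψ
        (Sum.elim (ι ∘ a) x)) →
    ∃ x : Fin k → M, φ.Realize (Sum.elim a x) ∧
      @Formula.Realize _ M (expandBy L M (fun i y => y ∈ Ps i) (fun e => e.elim)) _ ψ
        (Sum.elim a x)

/-- `q` is an heir of `p` (over `M`), for cuts. -/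
def IsHeirCut (L : FirstOrder.Language.{u, v}) (M : Type w) (N : Type w') [L.Structure M] [L.Structure N]
    [LinearOrder M] [LinearOrder N] (p : Cut M) (q : Cut N) (ι : M → N) : Prop :=
  IsHeirTuple L M N (fun _ : Fin 1 => p.carrier) (fun _ => q.carrier) ι

/-! ### Power functions (exponents) -/

/-- The graph of `f` is defined by the formula `φ`. -/
def GraphOf (L : FirstOrder.Language.{u, v}) (M : Type w) [L.Structure M] (φ : L.Formula (Fin 2))
    (f : M → M) : Prop :=
  ∀ x y : M, φ.Realize ![x, y] ↔ f x = y

/-- `φ` is (the graph of) a power function of `T`: in every model of `T` it defines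
a `0`-definable endomorphism of the multiplicative group of positive elements.
Power functions correspond uniquely to the exponents `λ` of `T`. -/
def IsPowerFormula (L : FirstOrder.Language.{u, v}) (ρ : ordRingLang →ᴸ L) (T : L.Theory)
    (φ : L.Formula (Fin 2)) : Prop :=
  ∀ (M : Type (max u v)) (iS : L.Structure M) (iF : LinearOrderedField M),
    @IsStdModel L ρ T M iS iF →
    ∃ f : M → M, @GraphOf L M iS φ f ∧ (∀ x : M, 0 < x → 0 < f x) ∧
      ∀ x y : M, 0 < x → 0 < y → f (x * y) = f x * f y

/-- The power function `x ↦ x^λ` with `λ = 0` is the constant function `1` on positives;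
an exponent is nonzero iff its power function is not constantly `1`. -/
def PowerNonzero {M : Type w} [LinearOrderedField M] (f : M → M) : Prop :=
  ¬ ∀ x : M, 0 < x → f x = 1

end CutPaper

namespace CutPaper

/-! ### Bundled standard models and theory-level notions -/

/-- A bundled standard model of `T`. -/
structure StdModelOf (L : FirstOrder.Language.{u, v}) (ρ : ordRingLang →ᴸ L) (T : L.Theory) where
  /-- the underlying type -/
  carrier : Type (max u v)
  [str : L.Structure carrier]
  [ofield : LinearOrderedField carrier]
  std : IsStdModel L ρ T carrier

attribute [instance] StdModelOf.str StdModelOf.ofield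

instance (L : FirstOrder.Language.{u, v}) (ρ : ordRingLang →ᴸ L) (T : L.Theory) :
    CoeSort (StdModelOf L ρ T) (Type (max u v)) :=
  ⟨StdModelOf.carrier⟩

/-- Realization of a formula with respect to an explicitly given structure. -/
def RealizeWith (L' : Language) (M : Type*) (S : L'.Structure M) {α : Type*}
    (φ : L'.Formula α) (v : α → M) : Prop := by
  letI := S; exact φ.Realize v

/-- Realization of a sentence with respect to an explicitly given structure. -/
def SentenceRealizeWith (L' : Language) (M : Type*) (S : L'.Structure M)
    (σ : L'.Sentence) : Prop :=
  RealizeWith L' M S σ (fun e => e.elim)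

/-- A cut is definable if its lower set is a definable (with parameters) subset. -/
def IsDefinableCut (L : Language) (M : Type*) [L.Structure M] [LinearOrder M]
    (p : Cut M) : Prop :=
  Set.Definable₁ (univ : Set M) L p.carrier

/-- A cut is dense if it is not definable and its invariance group is trivial. -/
def IsDenseCut (L : Language) (M : Type*) [L.Structure M] [LinearOrderedField M]
    (p : Cut M) : Prop :=
  ¬ IsDefinableCut L M p ∧ invGroup p = {(0 : M)}

/-- `T` is polynomially bounded (every `0`-definable function of every model is
eventually bounded by a power of the variable). -/
def PolyBounded (L : FirstOrder.Language.{u, v}) (ρ : ordRingLang →ᴸ L) (T : L.Theory) : Prop :=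
  ∀ M : StdModelOf L ρ T, PolyBoundedModel L M.carrier

/-- `T` has an archimedean prime model. -/
def HasArchPrime (L : FirstOrder.Language.{u, v}) (ρ : ordRingLang →ᴸ L) (T : L.Theory) : Prop :=
  ∃ P : StdModelOf L ρ T, Archimedean P.carrier ∧
    ∀ (N : Type (max u v)) (jS : L.Structure N), N ⊨ T → Nonempty (P.carrier ↪ₑ[L] N)

/-- `φ` is (the graph of) a power function of `T`: in every (standard) model of `T` it
defines the graph of an endomorphism of the multiplicative group of positive elements.
Power functions correspond uniquely to the exponents `λ ∈ ℝ` of `T`. -/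
def IsPowerFormulaB (L : FirstOrder.Language.{u, v}) (ρ : ordRingLang →ᴸ L) (T : L.Theory)
    (φ : L.Formula (Fin 2)) : Prop :=
  ∀ M : StdModelOf L ρ T, ∃ f : M.carrier → M.carrier, GraphOf L M.carrier φ f ∧
    (∀ x : M.carrier, 0 < x → 0 < f x) ∧
    ∀ x y : M.carrier, 0 < x → 0 < y → f (x * y) = f x * f y

/-- `g` is (the realization in one model of) a power function. -/
def IsPowerFunOn (M : Type*) [LinearOrderedField M] (g : M → M) : Prop :=
  (∀ x : M, 0 < x → 0 < g x) ∧ ∀ x y : M, 0 < x → 0 < y → g (x * y) = g x * g y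

/-- `T` has quantifier elimination. -/
def TheoryQE (L : FirstOrder.Language.{u, v}) (T : L.Theory) : Prop :=
  ∀ (n : ℕ) (φ : L.Formula (Fin n)), ∃ ψ : L.Formula (Fin n), BoundedFormula.IsQF ψ ∧
    ∀ (M : Type (max u v)) (iS : L.Structure M), M ⊨ T →
      ∀ v : Fin n → M, RealizeWith L M iS φ v ↔ RealizeWith L M iS ψ v

/-- `T` has a universal system of axioms. -/
def HasUniversalAxioms (L : FirstOrder.Language.{u, v}) (T : L.Theory) : Prop :=
  ∃ T' : L.Theory, (∀ σ ∈ T', ∃ (n : ℕ) (ψ : L.BoundedFormula Empty n), ψ.IsQF ∧ σ = ψ.alls) ∧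
    ∀ (M : Type (max u v)) (iS : L.Structure M),
      (@Theory.Model L M iS T) ↔ (@Theory.Model L M iS T')

end CutPaper

/-
Since `G` and `H` are closed under doubling, the lower set of `a + G⁺` is closed under
`x ↦ 2x − a` and the upper set of `b − H⁺` under `x ↦ 2x − b`. The midpoint `c = (a + b)/2`
is sent to `b` by the first map and to `a` by the second. So if the two cuts were equal, then
according to the side of `c` either `b` would lie below `b − H⁺` or `a` above `a + G⁺`, which is
impossible as `0 ∈ G ∩ H`.
-/

namespace CutPaper

section Group

variable {M : Type*} [LinearOrderedAddCommGroup M] {G H : Set M} {a b x : M}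

theorem mem_addCut_upperEdge :
    x ∈ (addCut a (upperEdge G)).carrier ↔ ∃ g ∈ G, x - a ≤ g :=
  Iff.rfl

theorem notMem_subCut_upperEdge :
    x ∉ (subCut b (upperEdge H)).carrier ↔ ∃ h ∈ H, b - x ≤ h :=
  not_not

theorem self_mem_addCut_upperEdge (hG : (0 : M) ∈ G) : a ∈ (addCut a (upperEdge G)).carrier :=
  mem_addCut_upperEdge.2 ⟨0, hG, (sub_self a).le⟩

theorem self_notMem_subCut_upperEdge (hH : (0 : M) ∈ H) :
    b ∉ (subCut b (upperEdge H)).carrier :=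
  notMem_subCut_upperEdge.2 ⟨0, hH, (sub_self b).le⟩

theorem add_self_sub_mem_addCut_upperEdge (hG : ∀ x ∈ G, ∀ y ∈ G, x + y ∈ G)
    (hx : x ∈ (addCut a (upperEdge G)).carrier) :
    x + x - a ∈ (addCut a (upperEdge G)).carrier := by
  obtain ⟨g, hg, hle⟩ := mem_addCut_upperEdge.1 hx
  refine mem_addCut_upperEdge.2 ⟨g + g, hG g hg g hg, ?_⟩
  calc x + x - a - a = (x - a) + (x - a) := by abel
    _ ≤ g + g := add_le_add hle hle

theorem add_self_sub_notMem_subCut_upperEdge (hH : ∀ x ∈ H, ∀ y ∈ H, x + y ∈ H)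
    (hx : x ∉ (subCut b (upperEdge H)).carrier) :
    x + x - b ∉ (subCut b (upperEdge H)).carrier := by
  obtain ⟨h, hh, hle⟩ := notMem_subCut_upperEdge.1 hx
  refine notMem_subCut_upperEdge.2 ⟨h + h, hH h hh h hh, ?_⟩
  calc b - (x + x - b) = (b - x) + (b - x) := by abel
    _ ≤ h + h := add_le_add hle hle

theorem addCut_upperEdge_ne_subCut_upperEdge {c : M} (hmid : c + c = a + b)
    (hG : IsConvexAddSubgroup G) (hH : IsConvexAddSubgroup H) :
    addCut a (upperEdge G) ≠ subCut b (upperEdge H) := by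
  intro heq
  by_cases hc : c ∈ (addCut a (upperEdge G)).carrier
  · have hb := add_self_sub_mem_addCut_upperEdge hG.2.1 hc
    rw [hmid, add_sub_cancel_left, heq] at hb
    exact self_notMem_subCut_upperEdge hH.1 hb
  · rw [heq] at hc
    have ha := add_self_sub_notMem_subCut_upperEdge hH.2.1 hc
    rw [hmid, add_sub_cancel_right, ← heq] at ha
    exact ha (self_mem_addCut_upperEdge hG.1)

end Group

/-- In a divisible ordered abelian group, a cut of the form `a + G⁺`
is never of the form `b − H⁺` (for convex subgroups `G`, `H`); hence the signature of
a cut is well defined. -/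
theorem statement_19 {K : Type*} [LinearOrderedAddCommGroup K]
    (hdiv : ∀ (x : K) (n : ℕ), 0 < n → ∃ y : K, n • y = x) :
    (∀ (a b : K) (G H : Set K), IsConvexAddSubgroup G → IsConvexAddSubgroup H →
      addCut a (upperEdge G) ≠ subCut b (upperEdge H)) ∧
    ∀ p : Cut K,
      ¬ ((∃ (a : K) (G : Set K), IsConvexAddSubgroup G ∧ p = addCut a (upperEdge G)) ∧
         (∃ (b : K) (H : Set K), IsConvexAddSubgroup H ∧ p = subCut b (upperEdge H))) := by
  have hne : ∀ (a b : K) (G H : Set K), IsConvexAddSubgroup G → IsConvexAddSubgroup H →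
      addCut a (upperEdge G) ≠ subCut b (upperEdge H) := by
    intro a b G H hG hH
    obtain ⟨c, hc⟩ := hdiv (a + b) 2 two_pos
    exact addCut_upperEdge_ne_subCut_upperEdge (two_nsmul c ▸ hc) hG hH
  refine ⟨hne, ?_⟩
  rintro p ⟨⟨a, G, hG, rfl⟩, ⟨b, H, hH, hpH⟩⟩
  exact hne a b G H hG hH hpH

end CutPaper
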